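/- arXiv:math/0503085 — 2 statements merged into one kernel-verified Lean document; each statement's English description precedes it below -/
import Mathlib

section
/- Suppose ℓ = ℓ' + 2^t where every exponent in the binary expansion of ℓ' is at most t − 2. If the set D(ℓ') = { a₁^{r₁+r₃} a₂^{r₁+r₂} (a₁+a₂)^{r₂+r₃} : r₁+r₂+r₃ = ℓ', multinomial coefficient odd } is linearly independent over 𝔽₂ in 𝔽₂[a₁,a₂], then the set D(ℓ) = a₁^{2^t}a₂^{2^t}·D(ℓ') ∪ a₁^{2^t}(a₁+a₂)^{2^t}·D(ℓ') ∪ a₂^{2^t}(a₁+a₂)^{2^t}·D(ℓ') is also linearly independent over 𝔽₂. -/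
open MvPolynomial

noncomputable section

abbrev R2 : Type := MvPolynomial (Fin 2) (ZMod 2)
def a1 : R2 := X 0
def a2 : R2 := X 1

def D (m : ℕ) : Set R2 :=
  {p | ∃ r₁ r₂ r₃ : ℕ, r₁ + r₂ + r₃ = m ∧
    Odd (m.factorial / (r₁.factorial * r₂.factorial * r₃.factorial)) ∧
    p = a1 ^ (r₁ + r₃) * a2 ^ (r₁ + r₂) * (a1 + a2) ^ (r₂ + r₃)}

def LinIndepF2 (S : Set R2) : Prop :=
  ∀ T : Finset R2, ↑T ⊆ S → T.Nonempty → ∑ x ∈ T, x ≠ 0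

/-!
Write a vanishing sum over the three translates as
`a₁^A a₂^A σ₁ + a₁^A (a₁+a₂)^A σ₂ + a₂^A (a₁+a₂)^A σ₃ = 0` with `A = 2^t` and each `σⱼ` a sum of
elements of `D ℓ'`. By Frobenius this is `a₁^{2A} σ₂ + a₂^{2A} σ₃ + a₁^A a₂^A (σ₁ + σ₂ + σ₃) = 0`.
The bit condition gives `2ℓ' < A`, and the `σⱼ` have degree `2ℓ'`, so comparing degrees in `a₁`
(resp. `a₂`) forces `σ₂ = 0` (resp. `σ₃ = 0`), hence `σ₁ = 0`; independence of `D ℓ'` then makes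
every part of the sum empty.
-/

theorem Nat.two_mul_lt_two_pow_of_testBit {n t : ℕ}
    (h : ∀ i, n.testBit i = true → i + 2 ≤ t) : 2 * n < 2 ^ t := by
  have hn : n < 2 ^ (t - 1) := Nat.lt_pow_two_of_testBit n fun i hi => by
    by_contra hb
    have := h i (by simpa using hb)
    omega
  rcases t with _ | t
  · simp only [zero_tsub, pow_zero, Order.lt_one_iff] at hn
    simp [hn]
  · rw [Nat.add_sub_cancel] at hn
    rw [pow_succ]
    omega

theorem Finset.sum_image_mul_left {α : Type*} [NonUnitalNonAssocSemiring α]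
    [IsLeftCancelMulZero α] [DecidableEq α] {c : α} (hc : c ≠ 0) (s : Finset α) :
    ∑ x ∈ s.image (c * ·), x = c * ∑ x ∈ s, x := by
  rw [Finset.sum_image fun _ _ _ _ h => mul_right_injective₀ hc h, Finset.mul_sum]

namespace MvPolynomial

variable {σ R : Type*} [CommSemiring R]

theorem coeff_eq_zero_of_degreeOf_lt {i : σ} {p : MvPolynomial σ R} {d : σ →₀ ℕ}
    (h : degreeOf i p < d i) : coeff d p = 0 := by
  by_contra hd
  exact absurd ((degreeOf_lt_iff (by omega)).1 h d (mem_support_iff.2 hd)) (lt_irrefl _)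

theorem eq_zero_of_X_pow_mul_add_eq_zero {i : σ} {n : ℕ} {q r : MvPolynomial σ R}
    (hr : degreeOf i r < n) (h : X i ^ n * q + r = 0) : q = 0 := by
  classical
  ext d
  have hd := congrArg (coeff (Finsupp.single i n + d)) h
  rw [coeff_add, X_pow_eq_monomial, coeff_monomial_mul, one_mul,
    coeff_eq_zero_of_degreeOf_lt (i := i) (p := r) (by simp; omega), add_zero, coeff_zero] at hd
  rw [hd, coeff_zero]

theorem eq_zero_of_X_pow_mul_add_X_pow_mul_add_eq_zero [Nontrivial R] {i j : σ} (hij : i ≠ j)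
    {n m k : ℕ} {q q' s : MvPolynomial σ R} (hq' : degreeOf i q' < 2 * n)
    (hs : degreeOf i s < n) (h : X i ^ (2 * n) * q + X j ^ m * q' + X i ^ n * X j ^ k * s = 0) :
    q = 0 := by
  refine eq_zero_of_X_pow_mul_add_eq_zero (r := X j ^ m * q' + X i ^ n * X j ^ k * s) ?_
    (by rw [← h, add_assoc])
  have h₁ := degreeOf_mul_le i (X j ^ m) q'
  have h₂ := degreeOf_mul_le i (X i ^ n * X j ^ k) s
  have h₃ := degreeOf_mul_le i (X i ^ n) (X j ^ k : MvPolynomial σ R)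
  rw [degreeOf_X_pow_of_ne _ hij] at h₁ h₃
  rw [degreeOf_X_self_pow] at h₃
  exact (degreeOf_add_le _ _ _).trans_lt (max_lt (by omega) (by omega))

end MvPolynomial

theorem a1_ne_zero : a1 ≠ 0 := X_ne_zero 0

theorem a2_ne_zero : a2 ≠ 0 := X_ne_zero 1

theorem a1_add_a2_ne_zero : a1 + a2 ≠ 0 := by
  intro h
  have h2 := congrArg (coeff (Finsupp.single (0 : Fin 2) 1)) h
  simp [a1, a2, coeff_X, Finsupp.single_eq_single_iff] at h2

theorem isHomogeneous_of_mem_D {m : ℕ} {p : R2} (hp : p ∈ D m) : p.IsHomogeneous (2 * m) := by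
  obtain ⟨r₁, r₂, r₃, hsum, -, rfl⟩ := hp
  have hX := isHomogeneous_X (ZMod 2) (σ := Fin 2)
  convert (((hX 0).pow (r₁ + r₃)).mul ((hX 1).pow (r₁ + r₂))).mul (((hX 0).add (hX 1)).pow (r₂ + r₃))
    using 1
  · rfl
  · omega

theorem LinIndepF2.eq_empty_of_sum_eq_zero {S : Set R2} (hS : LinIndepF2 S) {T : Finset R2}
    (hT : ↑T ⊆ S) (h : ∑ x ∈ T, x = 0) : T = ∅ := by
  by_contra hne
  exact hS T hT (Finset.nonempty_iff_ne_empty.2 hne) h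

theorem LinIndepF2.union_image_mul {S : Set R2} (hS : LinIndepF2 S) {c₁ c₂ c₃ : R2}
    (hc₁ : c₁ ≠ 0) (hc₂ : c₂ ≠ 0) (hc₃ : c₃ ≠ 0)
    (h : ∀ σ₁ ∈ Submodule.span (ZMod 2) S, ∀ σ₂ ∈ Submodule.span (ZMod 2) S,
      ∀ σ₃ ∈ Submodule.span (ZMod 2) S, c₁ * σ₁ + c₂ * σ₂ + c₃ * σ₃ = 0 →
        σ₁ = 0 ∧ σ₂ = 0 ∧ σ₃ = 0) :
    LinIndepF2 ((c₁ * ·) '' S ∪ (c₂ * ·) '' S ∪ (c₃ * ·) '' S) := by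
  classical
  intro T hT hTne hsum
  obtain ⟨T₁₂, T₃, rfl, hT₁₂, hT₃⟩ := Finset.subset_union_elim hT
  obtain ⟨T₁, T₂, rfl, hT₁, hT₂⟩ := Finset.subset_union_elim hT₁₂
  rw [Finset.sum_union (Finset.disjoint_coe.1 (Set.disjoint_sdiff_right.mono hT₁₂ hT₃)),
    Finset.sum_union (Finset.disjoint_coe.1 (Set.disjoint_sdiff_right.mono hT₁ hT₂))] at hsum
  obtain ⟨S₁, hS₁, rfl⟩ := Finset.subset_set_image_iff.1 hT₁
  obtain ⟨S₂, hS₂, rfl⟩ := Finset.subset_set_image_iff.1 (hT₂.trans Set.sdiff_subset)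
  obtain ⟨S₃, hS₃, rfl⟩ := Finset.subset_set_image_iff.1 (hT₃.trans Set.sdiff_subset)
  rw [Finset.sum_image_mul_left hc₁, Finset.sum_image_mul_left hc₂,
    Finset.sum_image_mul_left hc₃] at hsum
  have hspan {S' : Finset R2} (hS' : ↑S' ⊆ S) : ∑ x ∈ S', x ∈ Submodule.span (ZMod 2) S :=
    Submodule.sum_mem _ fun x hx => Submodule.subset_span (hS' hx)
  obtain ⟨h₁, h₂, h₃⟩ := h _ (hspan hS₁) _ (hspan hS₂) _ (hspan hS₃) hsum
  rw [hS.eq_empty_of_sum_eq_zero hS₁ h₁, hS.eq_empty_of_sum_eq_zero hS₂ h₂,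
    hS.eq_empty_of_sum_eq_zero hS₃ h₃] at hTne
  simp at hTne

theorem eq_zero_of_relation {n t : ℕ} (hn : n < 2 ^ t) {σ₁ σ₂ σ₃ : R2}
    (h₁ : σ₁ ∈ restrictTotalDegree (Fin 2) (ZMod 2) n)
    (h₂ : σ₂ ∈ restrictTotalDegree (Fin 2) (ZMod 2) n)
    (h₃ : σ₃ ∈ restrictTotalDegree (Fin 2) (ZMod 2) n)
    (h : a1 ^ 2 ^ t * a2 ^ 2 ^ t * σ₁ + a1 ^ 2 ^ t * (a1 + a2) ^ 2 ^ t * σ₂ +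
      a2 ^ 2 ^ t * (a1 + a2) ^ 2 ^ t * σ₃ = 0) :
    σ₁ = 0 ∧ σ₂ = 0 ∧ σ₃ = 0 := by
  have hdeg {p : R2} (hp : p ∈ restrictTotalDegree (Fin 2) (ZMod 2) n) (i : Fin 2) :
      degreeOf i p < 2 ^ t :=
    (degreeOf_le_totalDegree p i).trans_lt (((mem_restrictTotalDegree _ _ _).1 hp).trans_lt hn)
  have hs := add_mem (add_mem h₁ h₂) h₃
  rw [add_pow_char_pow] at h
  simp only [a1, a2] at h
  have hσ₂ : σ₂ = 0 := eq_zero_of_X_pow_mul_add_X_pow_mul_add_eq_zero (i := 0) (j := 1)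
    (q' := σ₃) (m := 2 * 2 ^ t) (k := 2 ^ t) (by decide) (by have := hdeg h₃ 0; omega)
    (hdeg hs 0) (by linear_combination h)
  have hσ₃ : σ₃ = 0 := eq_zero_of_X_pow_mul_add_X_pow_mul_add_eq_zero (i := 1) (j := 0)
    (q' := σ₂) (m := 2 * 2 ^ t) (k := 2 ^ t) (by decide) (by have := hdeg h₂ 1; omega)
    (hdeg hs 1) (by linear_combination h)
  subst hσ₂ hσ₃
  simpa [X_ne_zero] using h

theorem stmt_16_general (ℓ' t : ℕ)
    (hbits : ∀ i : ℕ, ℓ'.testBit i = true → i + 2 ≤ t)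
    (hind : LinIndepF2 (D ℓ')) :
    LinIndepF2 ((fun p => a1 ^ 2 ^ t * a2 ^ 2 ^ t * p) '' D ℓ' ∪
      (fun p => a1 ^ 2 ^ t * (a1 + a2) ^ 2 ^ t * p) '' D ℓ' ∪
      (fun p => a2 ^ 2 ^ t * (a1 + a2) ^ 2 ^ t * p) '' D ℓ') := by
  have hspan : Submodule.span (ZMod 2) (D ℓ') ≤ restrictTotalDegree (Fin 2) (ZMod 2) (2 * ℓ') :=
    Submodule.span_le.2 fun p hp => (mem_restrictTotalDegree _ _ _).2
      (isHomogeneous_of_mem_D hp).totalDegree_le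
  exact hind.union_image_mul
    (mul_ne_zero (pow_ne_zero _ a1_ne_zero) (pow_ne_zero _ a2_ne_zero))
    (mul_ne_zero (pow_ne_zero _ a1_ne_zero) (pow_ne_zero _ a1_add_a2_ne_zero))
    (mul_ne_zero (pow_ne_zero _ a2_ne_zero) (pow_ne_zero _ a1_add_a2_ne_zero))
    fun _ h₁ _ h₂ _ h₃ h => eq_zero_of_relation (Nat.two_mul_lt_two_pow_of_testBit hbits)
      (hspan h₁) (hspan h₂) (hspan h₃) h

theorem stmt_16 (ℓ ℓ' t : ℕ) (hℓ : ℓ = ℓ' + 2 ^ t)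
    (hbits : ∀ i : ℕ, ℓ'.testBit i = true → i + 2 ≤ t)
    (hind : LinIndepF2 (D ℓ')) :
    LinIndepF2 ((fun p => a1 ^ 2 ^ t * a2 ^ 2 ^ t * p) '' D ℓ' ∪
      (fun p => a1 ^ 2 ^ t * (a1 + a2) ^ 2 ^ t * p) '' D ℓ' ∪
      (fun p => a2 ^ 2 ^ t * (a1 + a2) ^ 2 ^ t * p) '' D ℓ') :=
  stmt_16_general ℓ' t hbits hind
end
end

section
/- For every natural number ℓ with the gap property (no two consecutive set bits in binary), the set D(ℓ) = { a₁^{r₁+r₃} a₂^{r₁+r₂} (a₁+a₂)^{r₂+r₃} : r₁+r₂+r₃ = ℓ, ℓ!/(r₁!r₂!r₃!) odd } is linearly independent over 𝔽₂ in 𝔽₂[a₁,a₂]. -/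
/-!
Write `ℓ = ∑ i ∈ S, 2 ^ i`. In characteristic 2,
`(1 + x) ^ (∑ i ∈ K, 2 ^ i) = ∏ i ∈ K, (1 + x ^ 2 ^ i) = ∑ J ⊆ K, x ^ (∑ i ∈ J, 2 ^ i)`;
this is Lucas's theorem mod 2, and it shows that the multinomial coefficient is odd exactly when
the binary digits of `r₁, r₂, r₃` split `S` into three disjoint blocks. So every element
of `D(ℓ)` is `a₁ ^ v(S \ B) * a₂ ^ v(S \ C) * (a₁ + a₂) ^ v(B ∪ C)` for disjoint
`B, C ⊆ S`, where `v K = bitSum K = ∑ i ∈ K, 2 ^ i`.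

Setting `a₂ = 1`, the `(B, C)`-term becomes `X ^ v(S \ B) * ∑ J ⊆ B ∪ C, X ^ v J`. Since `S` has no
two consecutive elements, base-2 expansions supported on `S` with digits below 4 are unique; hence
the monomial `X ^ (v(S \ B₀) + v C₀)` (digit 1 on `S \ (B₀ ∪ C₀)`, 2 on `C₀`, 0 on `B₀`) occurs
only in terms with `B₀ ⊆ B` and `C₀ ⊆ C`. In a nonempty sum of distinct elements, choosing
`(B₀, C₀)` with `#B₀ + #C₀` maximal, this monomial has coefficient 1.
-/

open MvPolynomial

noncomputable section

def GapProp (n : ℕ) : Prop :=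
  ∀ i : ℕ, ¬(n.testBit i = true ∧ n.testBit (i + 1) = true)

open Finset

def bitSum (S : Finset ℕ) : ℕ := ∑ i ∈ S, 2 ^ i

lemma bitSum_injective : Function.Injective bitSum :=
  geomSum_injective le_rfl

lemma bitSum_union {S T : Finset ℕ} (h : Disjoint S T) :
    bitSum (S ∪ T) = bitSum S + bitSum T :=
  sum_union h

lemma bitSum_sdiff_add {S T : Finset ℕ} (h : T ⊆ S) :
    bitSum (S \ T) + bitSum T = bitSum S := by
  rw [← bitSum_union sdiff_disjoint, sdiff_union_of_subset h]

lemma bitSum_toFinset_bitIndices (n : ℕ) : bitSum n.bitIndices.toFinset = n :=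
  sum_toFinset_bitIndices_two_pow n

lemma bitSum_eq_sum_indicator {S T : Finset ℕ} (h : T ⊆ S) :
    bitSum T = ∑ i ∈ S, (if i ∈ T then 1 else 0) * 2 ^ i := by
  simp only [ite_mul, one_mul, zero_mul, sum_ite_mem, inter_eq_right.2 h, bitSum]

section Frobenius

variable {R : Type*} [CommSemiring R] [CharP R 2]

lemma one_add_pow_bitSum (x : R) (K : Finset ℕ) :
    (1 + x) ^ bitSum K = ∑ J ∈ K.powerset, x ^ bitSum J := by
  simp only [bitSum, ← prod_pow_eq_pow_sum, add_pow_char_pow, one_pow, prod_one_add]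

lemma coeff_X_pow_mul_one_add_X_pow_bitSum (A m : ℕ) (K : Finset ℕ) :
    (Polynomial.X ^ A * (1 + Polynomial.X) ^ bitSum K : Polynomial R).coeff m =
      if ∃ J ⊆ K, A + bitSum J = m then 1 else 0 := by
  simp only [one_add_pow_bitSum, mul_sum, ← pow_add, Polynomial.finsetSum_coeff,
    Polynomial.coeff_X_pow]
  split_ifs with h
  · obtain ⟨J₀, hJ₀, rfl⟩ := h
    have hJ : ∀ J, A + bitSum J₀ = A + bitSum J ↔ J = J₀ := fun J =>
      ⟨fun h => bitSum_injective (Nat.add_left_cancel h).symm, fun h => h ▸ rfl⟩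
    simp only [hJ, sum_ite_eq', mem_powerset, hJ₀, if_true]
  · push Not at h
    exact sum_eq_zero fun J hJ => if_neg (h J (mem_powerset.1 hJ)).symm

end Frobenius

lemma odd_choose_bitSum_iff (K : Finset ℕ) (m : ℕ) :
    Odd ((bitSum K).choose m) ↔ ∃ J ⊆ K, bitSum J = m := by
  have h := coeff_X_pow_mul_one_add_X_pow_bitSum (R := ZMod 2) 0 m K
  rw [pow_zero, one_mul, Polynomial.coeff_one_add_X_pow] at h
  simp only [zero_add] at h
  rw [← ZMod.natCast_eq_one_iff_odd, h]
  split_ifs with hJ <;> simp [hJ]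

def NoConsecutive (S : Finset ℕ) : Prop := ∀ i ∈ S, i + 1 ∉ S

lemma NoConsecutive.mono {S T : Finset ℕ} (hS : NoConsecutive S) (hT : T ⊆ S) :
    NoConsecutive T :=
  fun i hi hi' => hS i (hT hi) (hT hi')

/-- Positions two apart leave room for digits up to `3` without carries. -/
lemma NoConsecutive.eqOn_of_sum_mul_two_pow_eq {S : Finset ℕ} (hS : NoConsecutive S)
    {f g : ℕ → ℕ} (hf : ∀ i ∈ S, f i < 4) (hg : ∀ i ∈ S, g i < 4)
    (h : ∑ i ∈ S, f i * 2 ^ i = ∑ i ∈ S, g i * 2 ^ i) : Set.EqOn f g S := by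
  induction S using Finset.induction_on_min with
  | empty => simp
  | insert a s ha ih =>
    have has : a ∉ s := fun h => lt_irrefl a (ha a h)
    have hdvd : ∀ u : ℕ → ℕ, 2 ^ (a + 2) ∣ ∑ i ∈ s, u i * 2 ^ i := by
      refine fun u => dvd_sum fun i hi => dvd_mul_of_dvd_right (pow_dvd_pow 2 ?_) _
      have : i ≠ a + 1 := fun hi' => hS a (mem_insert_self a s) (hi' ▸ mem_insert_of_mem hi)
      have := ha i hi
      omega
    obtain ⟨x, hx⟩ := hdvd f
    obtain ⟨y, hy⟩ := hdvd g
    rw [sum_insert has, sum_insert has, hx, hy] at h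
    have hfa := hf a (mem_insert_self a s)
    have hga := hg a (mem_insert_self a s)
    have hxy : f a = g a ∧ x = y := by
      have h' : 2 ^ a * (f a + 4 * x) = 2 ^ a * (g a + 4 * y) := by
        rw [pow_add] at h
        linear_combination h
      have := Nat.eq_of_mul_eq_mul_left (Nat.two_pow_pos a) h'
      omega
    intro i hi
    rcases mem_insert.1 hi with rfl | hi
    · exact hxy.1
    · exact ih (hS.mono (subset_insert a s)) (fun i hi => hf i (mem_insert_of_mem hi))
        (fun i hi => hg i (mem_insert_of_mem hi)) (by rw [hx, hy, hxy.2]) hi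

lemma factorial_div_factorial_mul_factorial_mul_factorial (r₁ r₂ r₃ : ℕ) :
    (r₁ + r₂ + r₃).factorial / (r₁.factorial * r₂.factorial * r₃.factorial) =
      (r₁ + r₂ + r₃).choose r₂ * (r₁ + r₃).choose r₃ := by
  refine Nat.div_eq_of_eq_mul_left (by positivity) ?_
  rw [show r₁ + r₂ + r₃ = r₁ + r₃ + r₂ by ring, ← Nat.add_choose_mul_factorial_mul_factorial,
    ← Nat.add_choose_mul_factorial_mul_factorial r₁ r₃]
  ring

/-- The element of `D (bitSum S)` with `r₂ = bitSum B` and `r₃ = bitSum C`. -/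
def dTerm (S B C : Finset ℕ) : R2 :=
  a1 ^ bitSum (S \ B) * a2 ^ bitSum (S \ C) * (a1 + a2) ^ bitSum (B ∪ C)

lemma exists_dTerm_eq_of_mem_D {S : Finset ℕ} {p : R2} (hp : p ∈ D (bitSum S)) :
    ∃ B C, B ∪ C ⊆ S ∧ Disjoint B C ∧ p = dTerm S B C := by
  obtain ⟨r₁, r₂, r₃, hsum, hodd, rfl⟩ := hp
  rw [← hsum, factorial_div_factorial_mul_factorial_mul_factorial, Nat.odd_mul, hsum] at hodd
  obtain ⟨B, hBS, rfl⟩ := (odd_choose_bitSum_iff S r₂).1 hodd.1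
  have hSB := bitSum_sdiff_add hBS
  have h₁₃ : r₁ + r₃ = bitSum (S \ B) := by omega
  rw [h₁₃] at hodd
  obtain ⟨C, hCSB, rfl⟩ := (odd_choose_bitSum_iff _ r₃).1 hodd.2
  have hCS : C ⊆ S := hCSB.trans sdiff_subset
  have hSC := bitSum_sdiff_add hCS
  have hdisj : Disjoint B C := disjoint_of_subset_right hCSB disjoint_sdiff
  have hBC := bitSum_union hdisj
  refine ⟨B, C, union_subset hBS hCS, hdisj, ?_⟩
  rw [dTerm, h₁₃, hBC, show r₁ + bitSum B = bitSum (S \ C) by omega]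

def dehomogenize : R2 →ₐ[ZMod 2] Polynomial (ZMod 2) :=
  aeval ![Polynomial.X, 1]

lemma dehomogenize_dTerm (S B C : Finset ℕ) :
    dehomogenize (dTerm S B C) =
      Polynomial.X ^ bitSum (S \ B) * (1 + Polynomial.X) ^ bitSum (B ∪ C) := by
  simp [dehomogenize, dTerm, a1, a2, add_comm]

lemma coeff_dehomogenize_dTerm_self (S B C : Finset ℕ) :
    (dehomogenize (dTerm S B C)).coeff (bitSum (S \ B) + bitSum C) = 1 := by
  rw [dehomogenize_dTerm, coeff_X_pow_mul_one_add_X_pow_bitSum,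
    if_pos ⟨C, subset_union_right, rfl⟩]

lemma subset_of_coeff_dehomogenize_dTerm_ne_zero {S B C B₀ C₀ : Finset ℕ} (hS : NoConsecutive S)
    (hBC : B ∪ C ⊆ S) (hBC₀ : B₀ ∪ C₀ ⊆ S) (hdisj : Disjoint B₀ C₀)
    (h : (dehomogenize (dTerm S B C)).coeff (bitSum (S \ B₀) + bitSum C₀) ≠ 0) :
    B₀ ⊆ B ∧ C₀ ⊆ C := by
  rw [dehomogenize_dTerm, coeff_X_pow_mul_one_add_X_pow_bitSum, ne_eq, ite_eq_right_iff,
    Classical.not_imp] at h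
  obtain ⟨⟨J, hJ, hsum⟩, -⟩ := h
  have hdigits := hS.eqOn_of_sum_mul_two_pow_eq
    (f := fun i => (if i ∈ S \ B then 1 else 0) + (if i ∈ J then 1 else 0))
    (g := fun i => (if i ∈ S \ B₀ then 1 else 0) + (if i ∈ C₀ then 1 else 0))
    (fun i _ => by split_ifs <;> omega) (fun i _ => by split_ifs <;> omega) (by
      simp only [add_mul, sum_add_distrib, ← bitSum_eq_sum_indicator sdiff_subset,
        ← bitSum_eq_sum_indicator (hJ.trans hBC),
        ← bitSum_eq_sum_indicator (subset_union_right.trans hBC₀)]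
      exact hsum)
  have hnot : ∀ {i T}, i ∈ T → i ∉ S \ T := fun hi h => (mem_sdiff.1 h).2 hi
  constructor
  · intro i hi
    have hiS := hBC₀ (mem_union_left _ hi)
    have hd : _ = _ := hdigits hiS
    dsimp only at hd
    rw [if_neg (hnot hi), if_neg (disjoint_left.1 hdisj hi)] at hd
    by_contra hiB
    rw [if_pos (mem_sdiff.2 ⟨hiS, hiB⟩)] at hd
    omega
  · intro i hi
    have hiS := hBC₀ (mem_union_right _ hi)
    have hd : _ = _ := hdigits hiS
    dsimp only at hd
    rw [if_pos (mem_sdiff.2 ⟨hiS, disjoint_right.1 hdisj hi⟩), if_pos hi] at hd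
    have hiB : i ∉ B := fun hiB => by rw [if_neg (hnot hiB)] at hd; split_ifs at hd <;> omega
    have hiJ : i ∈ J := by_contra fun hiJ => by rw [if_neg hiJ] at hd; split_ifs at hd <;> omega
    exact (mem_union.1 (hJ hiJ)).resolve_left hiB

lemma eq_and_eq_of_subset_of_card_add_le {α : Type*} {B C B₀ C₀ : Finset α}
    (hB : B₀ ⊆ B) (hC : C₀ ⊆ C) (h : #B + #C ≤ #B₀ + #C₀) : B₀ = B ∧ C₀ = C :=
  ⟨eq_of_subset_of_card_le hB (by have := card_le_card hC; omega),
    eq_of_subset_of_card_le hC (by have := card_le_card hB; omega)⟩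

lemma dTerm_eq_of_coeff_dehomogenize_ne_zero {S B C B₀ C₀ : Finset ℕ} (hS : NoConsecutive S)
    (hBC : B ∪ C ⊆ S) (hBC₀ : B₀ ∪ C₀ ⊆ S) (hdisj : Disjoint B₀ C₀)
    (hcard : #B + #C ≤ #B₀ + #C₀)
    (h : (dehomogenize (dTerm S B C)).coeff (bitSum (S \ B₀) + bitSum C₀) ≠ 0) :
    dTerm S B C = dTerm S B₀ C₀ := by
  obtain ⟨hB, hC⟩ := subset_of_coeff_dehomogenize_dTerm_ne_zero hS hBC hBC₀ hdisj h
  obtain ⟨rfl, rfl⟩ := eq_and_eq_of_subset_of_card_add_le hB hC hcard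
  rfl

lemma GapProp.noConsecutive {n : ℕ} (h : GapProp n) : NoConsecutive n.bitIndices.toFinset :=
  fun i hi hi' => h i
    ⟨Nat.mem_bitIndices.1 (List.mem_toFinset.1 hi), Nat.mem_bitIndices.1 (List.mem_toFinset.1 hi')⟩

theorem stmt_17 (ℓ : ℕ) (hgap : GapProp ℓ) : LinIndepF2 (D ℓ) := by
  intro T hTD hTne hsum
  set S := ℓ.bitIndices.toFinset
  rw [← bitSum_toFinset_bitIndices ℓ] at hTD
  have hrep : ∀ p ∈ T, ∃ B C, B ∪ C ⊆ S ∧ Disjoint B C ∧ p = dTerm S B C := fun p hp =>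
    exists_dTerm_eq_of_mem_D (hTD hp)
  choose! B C hBC hdisj hterm using hrep
  obtain ⟨p₀, hp₀, hmax⟩ := T.exists_max_image (fun p => #(B p) + #(C p)) hTne
  set m₀ := bitSum (S \ B p₀) + bitSum (C p₀)
  have hunique : ∀ p ∈ T, p ≠ p₀ → (dehomogenize p).coeff m₀ = 0 := by
    intro p hp hne
    by_contra h
    rw [hterm p hp] at h
    refine hne ?_
    rw [hterm p hp, hterm p₀ hp₀, dTerm_eq_of_coeff_dehomogenize_ne_zero hgap.noConsecutive
      (hBC p hp) (hBC p₀ hp₀) (hdisj p₀ hp₀) (hmax p hp) h]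
  have hcoeff := congrArg (fun q => (dehomogenize q).coeff m₀) hsum
  simp only [map_sum, Polynomial.finsetSum_coeff, sum_eq_single_of_mem p₀ hp₀ hunique,
    map_zero, Polynomial.coeff_zero] at hcoeff
  rw [hterm p₀ hp₀, coeff_dehomogenize_dTerm_self] at hcoeff
  exact one_ne_zero hcoeff
end
end
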